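/- Let G ∈ ℝ^{n×m} have a singular value decomposition G = U Σ Vᵀ, where U ∈ ℝ^{n×n} and V ∈ ℝ^{m×m} are orthogonal and Σ ∈ ℝ^{n×m} has Σ_{ij} = 0 for i ≠ j and Σ_{ii} = σ_i ≥ 0. For α > 0 define the soft-thresholded matrix S_α(Σ) by S_α(Σ)_{ii} = max(σ_i − α, 0) and S_α(Σ)_{ij} = 0 for i ≠ j. Then X* = U S_α(Σ) Vᵀ is the unique global minimizer over ℝ^{n×m} of the function X ↦ (1/2)‖X − G‖_F² + α‖X‖_*. -/

import Mathlib

open Matrix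

/-- Frobenius norm of a real matrix. -/
noncomputable def frobNorm {n m : ℕ} (X : Matrix (Fin n) (Fin m) ℝ) : ℝ :=
  Real.sqrt (∑ i, ∑ j, (X i j) ^ 2)

/-- Nuclear norm of a real matrix: the sum of its singular values, i.e. the square
roots of the eigenvalues of the positive semidefinite matrix `Xᵀ X` (over `ℝ`,
`Xᴴ = Xᵀ`). -/
noncomputable def nucNorm {n m : ℕ} (X : Matrix (Fin n) (Fin m) ℝ) : ℝ :=
  ∑ j, Real.sqrt ((show (Xᵀ * X).IsHermitian by
    simpa using Matrix.isHermitian_conjTranspose_mul_self X).eigenvalues j)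

/-- Euclidean (l²) norm on `ℝ^q`. -/
noncomputable def l2 {q : ℕ} (v : Fin q → ℝ) : ℝ :=
  Real.sqrt (∑ i, (v i) ^ 2)


/-!
The residual `W = G - U S_α Vᵀ = U (Σ - S_α) Vᵀ` is an orthogonal conjugate of a
rectangular-diagonal matrix with entries `min(σ_i, α)`, so `‖W v‖ ≤ α ‖v‖`. Pairing `W` with `X`
along an orthonormal eigenbasis of `XᵀX` and applying Cauchy–Schwarz column by column gives
`⟨W, X⟩ ≤ α ‖X‖_*`, while `⟨W, U S_α Vᵀ⟩ = α ‖U S_α Vᵀ‖_*` by direct computation (the nuclear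
norm only depends on the characteristic polynomial of `XᵀX`, hence is orthogonally invariant).
So `W` is a subgradient of `α ‖·‖_*` at `U S_α Vᵀ`, and expanding the square gives strict
optimality with margin `½ ‖X - U S_α Vᵀ‖²`.
-/

section Frobenius

variable {n m : ℕ}

lemma trace_transpose_mul_eq_sum (A B : Matrix (Fin n) (Fin m) ℝ) :
    trace (Aᵀ * B) = ∑ i, ∑ j, A i j * B i j := by
  rw [trace, Finset.sum_comm]
  rfl

lemma frobNorm_sq_eq_trace (A : Matrix (Fin n) (Fin m) ℝ) :
    frobNorm A ^ 2 = trace (Aᵀ * A) := by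
  rw [frobNorm, Real.sq_sqrt (by positivity), trace_transpose_mul_eq_sum]
  simp only [sq]

lemma trace_transpose_mul_comm (A B : Matrix (Fin n) (Fin m) ℝ) :
    trace (Aᵀ * B) = trace (Bᵀ * A) := by
  rw [← trace_transpose, transpose_mul, transpose_transpose]

lemma frobNorm_add_sq (A B : Matrix (Fin n) (Fin m) ℝ) :
    frobNorm (A + B) ^ 2 = frobNorm A ^ 2 + 2 * trace (Aᵀ * B) + frobNorm B ^ 2 := by
  simp only [frobNorm_sq_eq_trace, transpose_add, Matrix.add_mul, Matrix.mul_add, trace_add,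
    trace_transpose_mul_comm B A]
  ring

lemma frobNorm_pos {A : Matrix (Fin n) (Fin m) ℝ} (hA : A ≠ 0) : 0 < frobNorm A := by
  obtain ⟨i, j, hij⟩ : ∃ i j, A i j ≠ 0 := by
    by_contra! h
    exact hA (ext h)
  refine Real.sqrt_pos.2 (Finset.sum_pos' (fun _ _ => by positivity) ⟨i, by simp, ?_⟩)
  exact Finset.sum_pos' (fun _ _ => by positivity) ⟨j, by simp, by positivity⟩

lemma prox_objective_lt_of_subgradient {h : Matrix (Fin n) (Fin m) ℝ → ℝ}
    {G Y : Matrix (Fin n) (Fin m) ℝ} (hY : ∀ X, trace ((G - Y)ᵀ * (X - Y)) ≤ h X - h Y)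
    {X : Matrix (Fin n) (Fin m) ℝ} (hX : X ≠ Y) :
    (1 / 2) * frobNorm (Y - G) ^ 2 + h Y < (1 / 2) * frobNorm (X - G) ^ 2 + h X := by
  have hexp := frobNorm_add_sq (X - Y) (Y - G)
  rw [sub_add_sub_cancel] at hexp
  have hcross : trace ((X - Y)ᵀ * (Y - G)) = - trace ((G - Y)ᵀ * (X - Y)) := by
    rw [trace_transpose_mul_comm, ← neg_sub G Y, transpose_neg, Matrix.neg_mul, trace_neg]
  have hpos := frobNorm_pos (sub_ne_zero.2 hX)
  nlinarith [hY X]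

end Frobenius

section Orthogonal

variable {n m : ℕ}

lemma l2_eq_sqrt_dotProduct {q : ℕ} (v : Fin q → ℝ) : l2 v = √(v ⬝ᵥ v) := by
  simp [l2, dotProduct, sq]

lemma dotProduct_le_l2_mul_l2 {q : ℕ} (v w : Fin q → ℝ) : v ⬝ᵥ w ≤ l2 v * l2 w :=
  Real.sum_mul_le_sqrt_mul_sqrt _ v w

lemma dotProduct_self_ofLp {q : ℕ} (x : EuclideanSpace ℝ (Fin q)) : ⇑x ⬝ᵥ ⇑x = ‖x‖ ^ 2 := by
  rw [← real_inner_self_eq_norm_sq, EuclideanSpace.inner_eq_star_dotProduct]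
  simp

lemma mulVec_dotProduct_mulVec_self (X : Matrix (Fin n) (Fin m) ℝ) (v : Fin m → ℝ) :
    (X *ᵥ v) ⬝ᵥ (X *ᵥ v) = v ⬝ᵥ ((Xᵀ * X) *ᵥ v) := by
  rw [← mulVec_mulVec, dotProduct_mulVec v Xᵀ, vecMul_transpose]

lemma l2_mulVec_of_transpose_mul_self {q : ℕ} {U : Matrix (Fin q) (Fin q) ℝ}
    (hU : Uᵀ * U = 1) (v : Fin q → ℝ) : l2 (U *ᵥ v) = l2 v := by
  rw [l2_eq_sqrt_dotProduct, l2_eq_sqrt_dotProduct, dotProduct_mulVec, ← vecMul_transpose,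
    vecMul_vecMul, hU, vecMul_one]

lemma l2_conj_mulVec_le {U : Matrix (Fin n) (Fin n) ℝ} {V : Matrix (Fin m) (Fin m) ℝ}
    (hU : Uᵀ * U = 1) (hV : V * Vᵀ = 1) {A : Matrix (Fin n) (Fin m) ℝ} {c : ℝ}
    (hA : ∀ v, l2 (A *ᵥ v) ≤ c * l2 v) (v : Fin m → ℝ) : l2 ((U * A * Vᵀ) *ᵥ v) ≤ c * l2 v := by
  rw [← mulVec_mulVec, ← mulVec_mulVec, l2_mulVec_of_transpose_mul_self hU]
  calc l2 (A *ᵥ Vᵀ *ᵥ v) ≤ c * l2 (Vᵀ *ᵥ v) := hA _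
    _ = c * l2 v := by rw [l2_mulVec_of_transpose_mul_self (by rwa [transpose_transpose])]

lemma transpose_mul_conj {U : Matrix (Fin n) (Fin n) ℝ} (hU : Uᵀ * U = 1)
    (V : Matrix (Fin m) (Fin m) ℝ) (A B : Matrix (Fin n) (Fin m) ℝ) :
    (U * A * Vᵀ)ᵀ * (U * B * Vᵀ) = V * (Aᵀ * B) * Vᵀ := by
  simp only [transpose_mul, transpose_transpose, Matrix.mul_assoc]
  rw [← Matrix.mul_assoc Uᵀ, hU, Matrix.one_mul]

lemma trace_transpose_mul_conj {U : Matrix (Fin n) (Fin n) ℝ} {V : Matrix (Fin m) (Fin m) ℝ}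
    (hU : Uᵀ * U = 1) (hV : Vᵀ * V = 1) (A B : Matrix (Fin n) (Fin m) ℝ) :
    trace ((U * A * Vᵀ)ᵀ * (U * B * Vᵀ)) = trace (Aᵀ * B) := by
  rw [transpose_mul_conj hU, trace_mul_cycle, ← Matrix.mul_assoc, hV, Matrix.one_mul]

lemma trace_transpose_mul_eq_sum_mulVec {Q : Matrix (Fin m) (Fin m) ℝ} (hQ : Q * Qᵀ = 1)
    (A B : Matrix (Fin n) (Fin m) ℝ) :
    trace (Aᵀ * B) = ∑ j, (A *ᵥ Qᵀ j) ⬝ᵥ (B *ᵥ Qᵀ j) := by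
  have : trace (Aᵀ * B) = trace ((A * Q)ᵀ * (B * Q)) := by
    rw [transpose_mul, Matrix.mul_assoc, trace_mul_comm Qᵀ, Matrix.mul_assoc, Matrix.mul_assoc,
      hQ, Matrix.mul_one]
  rw [this]
  rfl

end Orthogonal

section NuclearNorm

variable {n m : ℕ}

lemma isHermitian_transpose_mul_self (X : Matrix (Fin n) (Fin m) ℝ) : (Xᵀ * X).IsHermitian := by
  simpa using isHermitian_conjTranspose_mul_self X

lemma nucNorm_eq_sum_sqrt_roots (X : Matrix (Fin n) (Fin m) ℝ) :
    nucNorm X = ((Xᵀ * X).charpoly.roots.map Real.sqrt).sum := by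
  rw [(isHermitian_transpose_mul_self X).roots_charpoly_eq_eigenvalues, Multiset.map_map]
  rfl

lemma nucNorm_conj {U : Matrix (Fin n) (Fin n) ℝ} {V : Matrix (Fin m) (Fin m) ℝ}
    (hU : Uᵀ * U = 1) (hV : Vᵀ * V = 1) (X : Matrix (Fin n) (Fin m) ℝ) :
    nucNorm (U * X * Vᵀ) = nucNorm X := by
  rw [nucNorm_eq_sum_sqrt_roots, nucNorm_eq_sum_sqrt_roots, transpose_mul_conj hU,
    Matrix.mul_assoc, charpoly_mul_comm, Matrix.mul_assoc, hV, Matrix.mul_one]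

open Polynomial in
lemma nucNorm_eq_sum_sqrt_of_transpose_mul_self_eq_diagonal {X : Matrix (Fin n) (Fin m) ℝ}
    {d : Fin m → ℝ} (hX : Xᵀ * X = diagonal d) : nucNorm X = ∑ k, √(d k) := by
  have hroots : (Xᵀ * X).charpoly.roots = Finset.univ.val.map d := by
    rw [hX, charpoly_diagonal, ← roots_multiset_prod_X_sub_C (Finset.univ.val.map d),
      Multiset.map_map]
    rfl
  rw [nucNorm_eq_sum_sqrt_roots, hroots, Multiset.map_map]
  rfl

lemma trace_transpose_mul_le_mul_nucNorm {W X : Matrix (Fin n) (Fin m) ℝ} {c : ℝ}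
    (hW : ∀ v, l2 (W *ᵥ v) ≤ c * l2 v) : trace (Wᵀ * X) ≤ c * nucNorm X := by
  have hA := isHermitian_transpose_mul_self X
  have hQ : (hA.eigenvectorUnitary : Matrix (Fin m) (Fin m) ℝ) * (↑hA.eigenvectorUnitary)ᵀ = 1 :=
    by simpa [star_eq_conjTranspose] using hA.eigenvectorUnitary.2.2
  set b := hA.eigenvectorBasis
  have hunit (j : Fin m) : l2 ⇑(b j) = 1 := by
    simp [l2_eq_sqrt_dotProduct, dotProduct_self_ofLp, b.orthonormal.1 j]
  have hXb (j : Fin m) : l2 (X *ᵥ ⇑(b j)) = √(hA.eigenvalues j) := by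
    rw [l2_eq_sqrt_dotProduct, mulVec_dotProduct_mulVec_self, hA.mulVec_eigenvectorBasis,
      dotProduct_smul, dotProduct_self_ofLp, b.orthonormal.1 j, smul_eq_mul]
    simp
  rw [trace_transpose_mul_eq_sum_mulVec hQ, nucNorm, Finset.mul_sum]
  refine Finset.sum_le_sum fun j _ => ?_
  calc (W *ᵥ ⇑(b j)) ⬝ᵥ (X *ᵥ ⇑(b j)) ≤ l2 (W *ᵥ ⇑(b j)) * l2 (X *ᵥ ⇑(b j)) :=
        dotProduct_le_l2_mul_l2 _ _
    _ ≤ c * l2 ⇑(b j) * l2 (X *ᵥ ⇑(b j)) := by gcongr; exacts [Real.sqrt_nonneg _, hW _]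
    _ = c * √(hA.eigenvalues j) := by rw [hunit, hXb, mul_one]

end NuclearNorm

def IsRectDiag {n m : ℕ} {R : Type*} [Zero R] (S : Matrix (Fin n) (Fin m) R) : Prop :=
  ∀ (i : Fin n) (j : Fin m), (i : ℕ) ≠ j → S i j = 0

namespace IsRectDiag

variable {n m : ℕ} {S : Matrix (Fin n) (Fin m) ℝ}

lemma sum_col (hS : IsRectDiag S) {g : ℝ → ℝ} (hg : g 0 = 0) (k : Fin m) :
    ∑ i, g (S i k) = if h : (k : ℕ) < n then g (S ⟨k, h⟩ k) else 0 := by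
  split_ifs with h
  · refine Fintype.sum_eq_single _ fun i hi => ?_
    rw [hS i k fun hik => hi (Fin.ext hik), hg]
  · refine Finset.sum_eq_zero fun i _ => ?_
    rw [hS i k fun hik => h (hik ▸ i.isLt), hg]

lemma transpose_mul_self (hS : IsRectDiag S) :
    Sᵀ * S = diagonal fun k => ∑ i, S i k ^ 2 := by
  ext k l
  rw [mul_apply, diagonal_apply]
  split_ifs with hkl
  · simp [hkl, sq]
  · refine Finset.sum_eq_zero fun i _ => ?_
    by_cases hik : (i : ℕ) = k
    · rw [transpose_apply, hS i l fun hil => hkl (Fin.ext (hik ▸ hil)), mul_zero]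
    · rw [transpose_apply, hS i k hik, zero_mul]

lemma nucNorm_eq (hS : IsRectDiag S) : nucNorm S = ∑ i, ∑ j, |S i j| := by
  rw [nucNorm_eq_sum_sqrt_of_transpose_mul_self_eq_diagonal hS.transpose_mul_self,
    Finset.sum_comm]
  refine Finset.sum_congr rfl fun k _ => ?_
  rw [hS.sum_col (g := (· ^ 2)) (zero_pow two_ne_zero), hS.sum_col abs_zero]
  split_ifs <;> simp [Real.sqrt_sq_eq_abs]

lemma l2_mulVec_le (hS : IsRectDiag S) {c : ℝ} (hc0 : 0 ≤ c) (hc : ∀ i j, |S i j| ≤ c)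
    (v : Fin m → ℝ) : l2 (S *ᵥ v) ≤ c * l2 v := by
  have hcol (k : Fin m) : ∑ i, S i k ^ 2 ≤ c ^ 2 := by
    rw [hS.sum_col (g := (· ^ 2)) (zero_pow two_ne_zero)]
    split_ifs
    · exact sq_le_sq' (abs_le.1 (hc _ _)).1 (abs_le.1 (hc _ _)).2
    · positivity
  have hquad : (S *ᵥ v) ⬝ᵥ (S *ᵥ v) ≤ c ^ 2 * (v ⬝ᵥ v) := by
    rw [mulVec_dotProduct_mulVec_self, hS.transpose_mul_self, dotProduct, dotProduct,
      Finset.mul_sum]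
    refine Finset.sum_le_sum fun k _ => ?_
    rw [mulVec_diagonal]
    nlinarith [hcol k, mul_self_nonneg (v k)]
  rw [l2_eq_sqrt_dotProduct, l2_eq_sqrt_dotProduct, ← Real.sqrt_sq hc0,
    ← Real.sqrt_mul (sq_nonneg c)]
  exact Real.sqrt_le_sqrt hquad

end IsRectDiag

section SoftThreshold

variable {n m : ℕ}

lemma abs_sub_max_sub_zero_le {σ α : ℝ} (hσ : 0 ≤ σ) (hα : 0 ≤ α) :
    |σ - max (σ - α) 0| ≤ α := by
  rcases le_total σ α with h | h
  · rw [max_eq_right (by linarith), sub_zero, abs_of_nonneg hσ]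
    exact h
  · rw [max_eq_left (by linarith), sub_sub_cancel, abs_of_nonneg hα]

lemma sub_max_sub_zero_mul (σ α : ℝ) :
    (σ - max (σ - α) 0) * max (σ - α) 0 = α * |max (σ - α) 0| := by
  rcases le_total σ α with h | h
  · simp [max_eq_right (sub_nonpos.2 h)]
  · rw [max_eq_left (sub_nonneg.2 h), abs_of_nonneg (sub_nonneg.2 h)]
    ring

def rectSoftThreshold (α : ℝ) (S : Matrix (Fin n) (Fin m) ℝ) : Matrix (Fin n) (Fin m) ℝ :=
  of fun i j => if (i : ℕ) = j then max (S i j - α) 0 else 0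

lemma isRectDiag_rectSoftThreshold (α : ℝ) (S : Matrix (Fin n) (Fin m) ℝ) :
    IsRectDiag (rectSoftThreshold α S) := fun i j h => by
  rw [rectSoftThreshold, of_apply, if_neg h]

lemma IsRectDiag.sub_rectSoftThreshold {S : Matrix (Fin n) (Fin m) ℝ} (hS : IsRectDiag S)
    (α : ℝ) : IsRectDiag (S - rectSoftThreshold α S) := fun i j h => by
  rw [Matrix.sub_apply, hS i j h, isRectDiag_rectSoftThreshold α S i j h, sub_zero]

lemma abs_sub_rectSoftThreshold_le {S : Matrix (Fin n) (Fin m) ℝ} (hS : IsRectDiag S)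
    (hS_nonneg : ∀ (i : Fin n) (j : Fin m), (i : ℕ) = j → 0 ≤ S i j) {α : ℝ} (hα : 0 ≤ α)
    (i : Fin n) (j : Fin m) : |(S - rectSoftThreshold α S) i j| ≤ α := by
  by_cases h : (i : ℕ) = j
  · rw [Matrix.sub_apply, rectSoftThreshold, of_apply, if_pos h]
    exact abs_sub_max_sub_zero_le (hS_nonneg i j h) hα
  · rw [hS.sub_rectSoftThreshold α i j h, abs_zero]
    exact hα

lemma trace_transpose_sub_rectSoftThreshold_mul (α : ℝ) (S : Matrix (Fin n) (Fin m) ℝ) :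
    trace ((S - rectSoftThreshold α S)ᵀ * rectSoftThreshold α S) =
      α * nucNorm (rectSoftThreshold α S) := by
  rw [(isRectDiag_rectSoftThreshold α S).nucNorm_eq, trace_transpose_mul_eq_sum, Finset.mul_sum]
  refine Finset.sum_congr rfl fun i _ => ?_
  rw [Finset.mul_sum]
  refine Finset.sum_congr rfl fun j _ => ?_
  by_cases h : (i : ℕ) = j
  · simp only [Matrix.sub_apply, rectSoftThreshold, of_apply, if_pos h, sub_max_sub_zero_mul]
  · rw [isRectDiag_rectSoftThreshold α S i j h, mul_zero, abs_zero, mul_zero]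

end SoftThreshold

theorem svt_prox_nucNorm_general (n m : ℕ)
    (G Sig : Matrix (Fin n) (Fin m) ℝ)
    (U : Matrix (Fin n) (Fin n) ℝ) (V : Matrix (Fin m) (Fin m) ℝ)
    (hU₁ : Uᵀ * U = 1)
    (hV₁ : Vᵀ * V = 1) (hV₂ : V * Vᵀ = 1)
    (hoffdiag : ∀ (i : Fin n) (j : Fin m), (i : ℕ) ≠ (j : ℕ) → Sig i j = 0)
    (hnonneg : ∀ (i : Fin n) (j : Fin m), (i : ℕ) = (j : ℕ) → 0 ≤ Sig i j)
    (hG : G = U * Sig * Vᵀ)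
    (α : ℝ) (hα : 0 < α)
    (Sα : Matrix (Fin n) (Fin m) ℝ)
    (hSα : Sα = Matrix.of fun (i : Fin n) (j : Fin m) =>
      if (i : ℕ) = (j : ℕ) then max (Sig i j - α) 0 else 0) :
    ∀ X : Matrix (Fin n) (Fin m) ℝ, X ≠ U * Sα * Vᵀ →
      (1 / 2) * frobNorm (U * Sα * Vᵀ - G) ^ 2 + α * nucNorm (U * Sα * Vᵀ) <
        (1 / 2) * frobNorm (X - G) ^ 2 + α * nucNorm X := by
  intro X hX
  obtain rfl : Sα = rectSoftThreshold α Sig := hSα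
  set T := rectSoftThreshold α Sig
  have hres : G - U * T * Vᵀ = U * (Sig - T) * Vᵀ := by
    rw [hG, Matrix.mul_sub, Matrix.sub_mul]
  have hres_le (v : Fin m → ℝ) : l2 ((G - U * T * Vᵀ) *ᵥ v) ≤ α * l2 v := by
    rw [hres]
    exact l2_conj_mulVec_le hU₁ hV₂ ((IsRectDiag.sub_rectSoftThreshold hoffdiag α).l2_mulVec_le
      hα.le (abs_sub_rectSoftThreshold_le hoffdiag hnonneg hα.le)) v
  have hres_inner : trace ((G - U * T * Vᵀ)ᵀ * (U * T * Vᵀ)) = α * nucNorm (U * T * Vᵀ) := by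
    rw [hres, trace_transpose_mul_conj hU₁ hV₁, nucNorm_conj hU₁ hV₁,
      trace_transpose_sub_rectSoftThreshold_mul]
  refine prox_objective_lt_of_subgradient (h := fun X => α * nucNorm X) (fun X => ?_) hX
  rw [Matrix.mul_sub, trace_sub, hres_inner]
  linarith [trace_transpose_mul_le_mul_nucNorm (X := X) hres_le]

/-- Singular value thresholding: if `G = U Σ Vᵀ` is a singular value decomposition
(`U ∈ ℝ^{n×n}`, `V ∈ ℝ^{m×m}` orthogonal, `Σ ∈ ℝ^{n×m}` rectangular-diagonal with
nonnegative diagonal entries `σ_i`), then for `α > 0` the matrix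
`X* = U S_α(Σ) Vᵀ`, where `S_α(Σ)_{ii} = max(σ_i − α, 0)` and `S_α(Σ)_{ij} = 0` for
`i ≠ j`, is the unique global minimizer over `ℝ^{n×m}` of
`X ↦ (1/2)‖X − G‖_F² + α‖X‖_*`. -/
theorem svt_prox_nucNorm (n m : ℕ)
    (G Sig : Matrix (Fin n) (Fin m) ℝ)
    (U : Matrix (Fin n) (Fin n) ℝ) (V : Matrix (Fin m) (Fin m) ℝ)
    (hU₁ : Uᵀ * U = 1) (hU₂ : U * Uᵀ = 1)
    (hV₁ : Vᵀ * V = 1) (hV₂ : V * Vᵀ = 1)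
    (hoffdiag : ∀ (i : Fin n) (j : Fin m), (i : ℕ) ≠ (j : ℕ) → Sig i j = 0)
    (hnonneg : ∀ (i : Fin n) (j : Fin m), (i : ℕ) = (j : ℕ) → 0 ≤ Sig i j)
    (hG : G = U * Sig * Vᵀ)
    (α : ℝ) (hα : 0 < α)
    (Sα : Matrix (Fin n) (Fin m) ℝ)
    (hSα : Sα = Matrix.of fun (i : Fin n) (j : Fin m) =>
      if (i : ℕ) = (j : ℕ) then max (Sig i j - α) 0 else 0) :
    ∀ X : Matrix (Fin n) (Fin m) ℝ, X ≠ U * Sα * Vᵀ →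
      (1 / 2) * frobNorm (U * Sα * Vᵀ - G) ^ 2 + α * nucNorm (U * Sα * Vᵀ) <
        (1 / 2) * frobNorm (X - G) ^ 2 + α * nucNorm X :=
  svt_prox_nucNorm_general n m G Sig U V hU₁ hV₁ hV₂ hoffdiag hnonneg hG α hα Sα hSα
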